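/- arXiv:0804.0671 — 2 statements merged into one kernel-verified Lean document; each statement's English description precedes it below -/
import Mathlib

section
/- (Theorem 3, covariance-ordering part.) Suppose R and S are two Markov transition kernels on Y having f_Y as invariant density, and suppose R dominates S in the covariance ordering with respect to f_Y: for every measurable φ : Y → ℝ with ∫_Y φ² f_Y dμ_y < ∞ and ∫_Y φ f_Y dμ_y = 0, ∫_Y ∫_Y φ(y) φ(y') R(y,dy') f_Y(y) μ_y(dy) ≤ ∫_Y ∫_Y φ(y) φ(y') S(y,dy') f_Y(y) μ_y(dy). Then for every measurable h : X → ℝ with ∫_X h² f_X dμ_x < ∞ and ∫_X h f_X dμ_x = 0, ∫_X ∫_X h(x) h(x') p_R(x|x') f_X(x') μ_x(dx') μ_x(dx) ≤ ∫_X ∫_X h(x) h(x') p_S(x|x') f_X(x') μ_x(dx') μ_x(dx). -/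
/-!
Put `φ(y) = E[h(X) | Y = y] = ∫ h(x) f_{X|Y}(x|y) dx`. Integrating out `x` and `x'` (Fubini)
turns the `p_K`-autocovariance of `h` into `∫ φ (Kφ) f_Y` for every `f_Y`-invariant kernel `K`,
while `∫ φ f_Y = ∫ h f_X = 0` and, by Jensen, `∫ φ² f_Y ≤ ∫ h² f_X < ∞`; so the covariance
ordering of `R` and `S` applied to `φ` is the claim. The Fubini steps are justified by
`g = E[|h(X)| | Y]`: `g (Kg) ≤ g² + K(g²)` pointwise, and invariance gives
`∫ g (Kg) f_Y ≤ 2 ∫ g² f_Y < ∞`.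
-/

open MeasureTheory ProbabilityTheory Function
open scoped ENNReal

theorem ENNReal.mul_le_sq_add_sq (a b : ℝ≥0∞) : a * b ≤ a ^ 2 + b ^ 2 := by
  rcases le_total a b with hab | hab
  · calc a * b ≤ b ^ 2 := by rw [sq]; gcongr
      _ ≤ a ^ 2 + b ^ 2 := le_add_self
  · calc a * b ≤ a ^ 2 := by rw [sq]; gcongr
      _ ≤ a ^ 2 + b ^ 2 := le_self_add

section General

variable {α : Type*} [MeasurableSpace α]

theorem sq_lintegral_le_lintegral_sq {ν : Measure α} [IsProbabilityMeasure ν] {u : α → ℝ≥0∞}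
    (hu : AEMeasurable u ν) : (∫⁻ a, u a ∂ν) ^ 2 ≤ ∫⁻ a, u a ^ 2 ∂ν := by
  have holder := ENNReal.lintegral_mul_le_Lp_mul_Lq ν Real.HolderConjugate.two_two hu
    (aemeasurable_const (b := (1 : ℝ≥0∞)))
  simp only [Pi.mul_apply, mul_one, one_pow, lintegral_const, measure_univ, ENNReal.one_rpow,
    ENNReal.rpow_two] at holder
  calc (∫⁻ a, u a ∂ν) ^ 2 ≤ ((∫⁻ a, u a ^ 2 ∂ν) ^ (1 / 2 : ℝ)) ^ 2 := by gcongr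
    _ = ∫⁻ a, u a ^ 2 ∂ν := by
      rw [← ENNReal.rpow_natCast, ← ENNReal.rpow_mul]; norm_num

theorem sq_lintegral_mul_le_of_lintegral_eq_one {μ : Measure α} {p u : α → ℝ≥0∞}
    (hp : Measurable p) (hp1 : ∫⁻ a, p a ∂μ = 1) (hu : Measurable u) :
    (∫⁻ a, p a * u a ∂μ) ^ 2 ≤ ∫⁻ a, p a * u a ^ 2 ∂μ := by
  have : IsProbabilityMeasure (μ.withDensity p) :=
    ⟨by rwa [withDensity_apply _ .univ, Measure.restrict_univ]⟩
  have jensen := sq_lintegral_le_lintegral_sq (ν := μ.withDensity p) hu.aemeasurable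
  rwa [lintegral_withDensity_eq_lintegral_mul _ hp hu,
    lintegral_withDensity_eq_lintegral_mul _ hp (hu.pow_const 2)] at jensen

theorem integrable_mul_of_integrable_sq_mul {μ : Measure α} {h w : α → ℝ} (hh : Measurable h)
    (hw : Measurable w) (hw0 : 0 ≤ w) (hwi : Integrable w μ)
    (hh2 : Integrable (fun a => h a ^ 2 * w a) μ) : Integrable (fun a => h a * w a) μ := by
  refine (hh2.add hwi).mono' (by fun_prop) (.of_forall fun a => ?_)
  simp only [Pi.add_apply]
  rw [norm_mul, Real.norm_of_nonneg (hw0 a), Real.norm_eq_abs, ← add_one_mul]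
  gcongr
  · exact hw0 a
  · nlinarith [sq_abs (h a), sq_nonneg (|h a| - 1)]

theorem integral_integral_swap_of_lintegral_enorm_lt_top {β E : Type*} [MeasurableSpace β]
    [NormedAddCommGroup E] [NormedSpace ℝ E] {μ : Measure α} {ν : Measure β} [SFinite μ]
    [SFinite ν] {F : α → β → E} (hF : AEStronglyMeasurable (uncurry F) (μ.prod ν))
    (hF_fin : ∫⁻ x, ∫⁻ y, ‖F x y‖ₑ ∂ν ∂μ < ∞) :
    ∫ x, ∫ y, F x y ∂ν ∂μ = ∫ y, ∫ x, F x y ∂μ ∂ν :=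
  integral_integral_swap ⟨hF, by rwa [hasFiniteIntegral_iff_enorm, lintegral_prod _ hF.enorm]⟩

variable {K : Kernel α α} [IsMarkovKernel K]

theorem Kernel.comp_withDensity_eq_of_integral_eq {μ : Measure α} {w : α → ℝ}
    (hw : Measurable w) (hw0 : 0 ≤ w) (hwi : Integrable w μ)
    (hK : ∀ A, MeasurableSet A → ∫ y, (K y A).toReal * w y ∂μ = ∫ y in A, w y ∂μ) :
    K ∘ₘ μ.withDensity (fun y => ‖w y‖ₑ) = μ.withDensity (fun y => ‖w y‖ₑ) := by
  ext A hA
  have hint : Integrable (fun y => (K y A).toReal * w y) μ := by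
    refine hwi.mono' ((K.measurable_coe hA).ennreal_toReal.mul hw).aestronglyMeasurable
      (.of_forall fun y => ?_)
    rw [norm_mul, Real.norm_of_nonneg ENNReal.toReal_nonneg, Real.norm_of_nonneg (hw0 y)]
    exact mul_le_of_le_one_left (hw0 y) measureReal_le_one
  rw [Measure.bind_apply hA K.aemeasurable, withDensity_apply _ hA,
    lintegral_withDensity_eq_lintegral_mul _ hw.enorm (K.measurable_coe hA)]
  simp only [Pi.mul_apply, Real.enorm_of_nonneg (hw0 _)]
  rw [← ofReal_integral_eq_lintegral_ofReal hwi.restrict (.of_forall fun y => hw0 y), ← hK A hA,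
    ofReal_integral_eq_lintegral_ofReal hint
      (.of_forall fun y => mul_nonneg ENNReal.toReal_nonneg (hw0 y))]
  refine lintegral_congr fun y => ?_
  rw [ENNReal.ofReal_mul' (hw0 y), ENNReal.ofReal_toReal (measure_ne_top _ _), mul_comm]

theorem lintegral_mul_lintegral_kernel_le {ν : Measure α} (hK : K ∘ₘ ν = ν) {g : α → ℝ≥0∞}
    (hg : Measurable g) : ∫⁻ y, g y * ∫⁻ y', g y' ∂K y ∂ν ≤ 2 * ∫⁻ y, g y ^ 2 ∂ν := by
  calc ∫⁻ y, g y * ∫⁻ y', g y' ∂K y ∂ν ≤ ∫⁻ y, (g y ^ 2 + ∫⁻ y', g y' ^ 2 ∂K y) ∂ν :=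
        lintegral_mono fun y => (ENNReal.mul_le_sq_add_sq _ _).trans
          (by gcongr; exact sq_lintegral_le_lintegral_sq hg.aemeasurable)
    _ = ∫⁻ y, g y ^ 2 ∂ν + ∫⁻ y, ∫⁻ y', g y' ^ 2 ∂K y ∂ν :=
        lintegral_add_left (hg.pow_const 2) _
    _ = 2 * ∫⁻ y, g y ^ 2 ∂ν := by
        rw [← Measure.lintegral_bind K.aemeasurable (hg.pow_const 2).aemeasurable, hK, two_mul]

theorem lintegral_lintegral_kernel_mul_lt_top {μ : Measure α} {w : α → ℝ} (hw : Measurable w)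
    (hK : K ∘ₘ μ.withDensity (fun y => ‖w y‖ₑ) = μ.withDensity (fun y => ‖w y‖ₑ))
    {g : α → ℝ≥0∞} (hg : Measurable g) (hg2 : ∫⁻ y, g y ^ 2 * ‖w y‖ₑ ∂μ < ∞) :
    ∫⁻ y, (∫⁻ y', g y' ∂K y) * (g y * ‖w y‖ₑ) ∂μ < ∞ :=
  calc _ = ∫⁻ y, g y * ∫⁻ y', g y' ∂K y ∂μ.withDensity (fun y => ‖w y‖ₑ) := by
        rw [lintegral_withDensity_eq_lintegral_mul _ hw.enorm (by fun_prop)]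
        exact lintegral_congr fun y => by simp only [Pi.mul_apply]; ring
    _ ≤ 2 * ∫⁻ y, g y ^ 2 ∂μ.withDensity (fun y => ‖w y‖ₑ) :=
        lintegral_mul_lintegral_kernel_le hK hg
    _ < ∞ := by
        rw [lintegral_withDensity_eq_lintegral_mul _ hw.enorm (by fun_prop)]
        simp_rw [Pi.mul_apply, mul_comm (‖w _‖ₑ)]
        exact ENNReal.mul_lt_top (by simp) hg2

end General

section ConditionalMean

variable {X Y : Type*} [MeasurableSpace X] {μx : Measure X} {c : X → Y → ℝ} {h : X → ℝ}

/-- `y ↦ E[h(X) | Y = y]` when `c x y` is the conditional density of `X` given `Y = y`. -/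
noncomputable def condMean (μx : Measure X) (c : X → Y → ℝ) (h : X → ℝ) (y : Y) : ℝ :=
  ∫ x, h x * c x y ∂μx

theorem enorm_condMean_le (y : Y) : ‖condMean μx c h y‖ₑ ≤ ∫⁻ x, ‖h x * c x y‖ₑ ∂μx :=
  enorm_integral_le_lintegral_enorm _

theorem sq_lintegral_enorm_mul_le {y : Y} (hc : Measurable fun x => c x y) (hh : Measurable h)
    (hc1 : ∫⁻ x, ‖c x y‖ₑ ∂μx = 1) :
    (∫⁻ x, ‖h x * c x y‖ₑ ∂μx) ^ 2 ≤ ∫⁻ x, ‖h x ^ 2 * c x y‖ₑ ∂μx := by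
  simp only [enorm_mul, enorm_pow, mul_comm ‖h _‖ₑ, mul_comm (‖h _‖ₑ ^ 2)]
  exact sq_lintegral_mul_le_of_lintegral_eq_one hc.enorm hc1 hh.enorm

variable [MeasurableSpace Y] {μy : Measure Y} {K : Kernel Y Y} {w : Y → ℝ} [SFinite μx]

theorem measurable_condMean (hc : Measurable (uncurry c)) (hh : Measurable h) :
    Measurable (condMean μx c h) :=
  (show Measurable fun p : X × Y => h p.1 * c p.1 p.2 by fun_prop).stronglyMeasurable
    |>.integral_prod_left' |>.measurable

theorem measurable_lintegral_enorm_mul (hc : Measurable (uncurry c)) (hh : Measurable h) :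
    Measurable fun y => ∫⁻ x, ‖h x * c x y‖ₑ ∂μx :=
  (show Measurable fun p : X × Y => ‖h p.1 * c p.1 p.2‖ₑ by fun_prop).lintegral_prod_left'

theorem measurable_uncurry_integral_kernel [IsSFiniteKernel K] {F : X → Y → ℝ}
    (hF : Measurable (uncurry F)) : Measurable (uncurry fun x y => ∫ y', F x y' ∂K y) := by
  have := (show Measurable fun q : (X × Y) × Y => F q.1.1 q.2 by fun_prop).stronglyMeasurable
    |>.integral_kernel_prod_right' (κ := Kernel.prodMkLeft X K)
  simp only [Kernel.prodMkLeft_apply] at this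
  exact this.measurable

theorem measurable_uncurry_lintegral_kernel [IsSFiniteKernel K] {F : X → Y → ℝ≥0∞}
    (hF : Measurable (uncurry F)) : Measurable (uncurry fun x y => ∫⁻ y', F x y' ∂K y) := by
  have := (show Measurable fun q : (X × Y) × Y => F q.1.1 q.2 by fun_prop)
    |>.lintegral_kernel_prod_right' (κ := Kernel.prodMkLeft X K)
  simp only [Kernel.prodMkLeft_apply] at this
  exact this

theorem integral_mul_integral_eq_integral_condMean {ν : Measure Y} [SFinite ν]
    (hc : Measurable (uncurry c)) (hh : Measurable h)
    (hfin : ∫⁻ y, ∫⁻ x, ‖h x * c x y‖ₑ ∂μx ∂ν < ∞) :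
    ∫ x, h x * ∫ y, c x y ∂ν ∂μx = ∫ y, condMean μx c h y ∂ν := by
  simp_rw [← integral_const_mul]
  exact integral_integral_swap_of_lintegral_enorm_lt_top (by fun_prop)
    (by rwa [lintegral_lintegral_swap (by fun_prop)])

theorem integrable_condMean_sq_mul (hc : Measurable (uncurry c)) (hh : Measurable h)
    (hw : Measurable w) (hg2 : ∫⁻ y, (∫⁻ x, ‖h x * c x y‖ₑ ∂μx) ^ 2 * ‖w y‖ₑ ∂μy < ∞) :
    Integrable (fun y => condMean μx c h y ^ 2 * w y) μy := by
  have := measurable_condMean (μx := μx) hc hh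
  refine ⟨by fun_prop, hasFiniteIntegral_iff_enorm.2 (hg2.trans_le' (lintegral_mono fun y => ?_))⟩
  rw [enorm_mul, enorm_pow]
  gcongr
  exact enorm_condMean_le y

variable [SFinite μy]

theorem integral_mul_integral_mul_eq_integral_condMean {a : Y → ℝ}
    (hc : Measurable (uncurry c)) (hh : Measurable h) (hw : Measurable w) (ha : Measurable a)
    (hfin : ∫⁻ y, ‖a y‖ₑ * ((∫⁻ x, ‖h x * c x y‖ₑ ∂μx) * ‖w y‖ₑ) ∂μy < ∞) :
    ∫ x, h x * ∫ y, a y * (c x y * w y) ∂μy ∂μx = ∫ y, a y * (condMean μx c h y * w y) ∂μy := by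
  have hbound : ∫⁻ x, ∫⁻ y, ‖h x * (a y * (c x y * w y))‖ₑ ∂μy ∂μx
      = ∫⁻ y, ‖a y‖ₑ * ((∫⁻ x, ‖h x * c x y‖ₑ ∂μx) * ‖w y‖ₑ) ∂μy := by
    rw [lintegral_lintegral_swap (by fun_prop)]
    refine lintegral_congr fun y => ?_
    rw [← lintegral_mul_const _ (by fun_prop), ← lintegral_const_mul _ (by fun_prop)]
    refine lintegral_congr fun x => ?_
    simp only [enorm_mul]
    ring
  simp_rw [← integral_const_mul]
  rw [integral_integral_swap_of_lintegral_enorm_lt_top (by fun_prop) (hbound ▸ hfin)]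
  refine integral_congr_ae (.of_forall fun y => ?_)
  simp only [condMean, ← integral_mul_const, ← integral_const_mul]
  exact integral_congr_ae (.of_forall fun x => by ring)

theorem integral_condMean_mul (hc : Measurable (uncurry c)) (hh : Measurable h)
    (hw : Measurable w) (hfin : ∫⁻ y, (∫⁻ x, ‖h x * c x y‖ₑ ∂μx) * ‖w y‖ₑ ∂μy < ∞) :
    ∫ y, condMean μx c h y * w y ∂μy = ∫ x, h x * ∫ y, c x y * w y ∂μy ∂μx := by
  simpa only [one_mul] using (integral_mul_integral_mul_eq_integral_condMean hc hh hw
    (measurable_const (a := (1 : ℝ))) (by simpa only [enorm_one, one_mul] using hfin)).symm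

theorem integral_integral_mul_integral_mul_eq {A : X → Y → ℝ}
    (hc : Measurable (uncurry c)) (hh : Measurable h) (hw : Measurable w)
    (hA : Measurable (uncurry A))
    (hfin : ∫⁻ x, ∫⁻ y, ‖h x * A x y‖ₑ * ((∫⁻ x', ‖h x' * c x' y‖ₑ ∂μx) * ‖w y‖ₑ) ∂μy ∂μx < ∞) :
    ∫ x, ∫ x', h x * h x' * ∫ y, A x y * (c x' y * w y) ∂μy ∂μx ∂μx
      = ∫ y, (∫ x, h x * A x y ∂μx) * (condMean μx c h y * w y) ∂μy := by
  have := measurable_condMean (μx := μx) hc hh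
  calc _ = ∫ x, ∫ y, h x * A x y * (condMean μx c h y * w y) ∂μy ∂μx := by
        refine integral_congr_ae ((ae_lt_top' (by fun_prop) hfin.ne).mono fun x hx => ?_)
        dsimp only
        rw [← integral_mul_integral_mul_eq_integral_condMean hc hh hw (by fun_prop) hx]
        simp only [← integral_const_mul]
        exact integral_congr_ae (.of_forall fun x' =>
          integral_congr_ae (.of_forall fun y => by ring))
    _ = ∫ y, ∫ x, h x * A x y * (condMean μx c h y * w y) ∂μx ∂μy := by
        refine integral_integral_swap_of_lintegral_enorm_lt_top (by fun_prop) (hfin.trans_le' ?_)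
        gcongr with x y
        rw [enorm_mul, enorm_mul (condMean μx c h y)]
        gcongr
        exact enorm_condMean_le y
    _ = _ := integral_congr_ae (.of_forall fun y => integral_mul_const _ _)

theorem integral_integral_mul_kernel_eq [IsMarkovKernel K] (hc : Measurable (uncurry c))
    (hh : Measurable h) (hw : Measurable w)
    (hK : K ∘ₘ μy.withDensity (fun y => ‖w y‖ₑ) = μy.withDensity (fun y => ‖w y‖ₑ))
    (hg2 : ∫⁻ y, (∫⁻ x, ‖h x * c x y‖ₑ ∂μx) ^ 2 * ‖w y‖ₑ ∂μy < ∞) :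
    ∫ x, ∫ x', h x * h x' * ∫ y, (∫ y', c x y' ∂K y) * (c x' y * w y) ∂μy ∂μx ∂μx
      = ∫ y, condMean μx c h y * (∫ y', condMean μx c h y' ∂K y) * w y ∂μy := by
  set g := fun y => ∫⁻ x, ‖h x * c x y‖ₑ ∂μx
  have hg : Measurable g := measurable_lintegral_enorm_mul hc hh
  have hT := lintegral_lintegral_kernel_mul_lt_top hw hK hg hg2
  have := measurable_uncurry_lintegral_kernel (K := K)
    (show Measurable (uncurry fun x y => ‖h x * c x y‖ₑ) by fun_prop)
  have hbound : ∫⁻ x, ∫⁻ y, ‖h x * ∫ y', c x y' ∂K y‖ₑ * (g y * ‖w y‖ₑ) ∂μy ∂μx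
      ≤ ∫⁻ y, (∫⁻ y', g y' ∂K y) * (g y * ‖w y‖ₑ) ∂μy :=
    calc _ ≤ ∫⁻ x, ∫⁻ y, (∫⁻ y', ‖h x * c x y'‖ₑ ∂K y) * (g y * ‖w y‖ₑ) ∂μy ∂μx := by
          gcongr with x y
          rw [← integral_const_mul]
          exact enorm_integral_le_lintegral_enorm _
      _ = _ := by
          rw [lintegral_lintegral_swap (by fun_prop)]
          refine lintegral_congr fun y => ?_
          rw [lintegral_mul_const _ (by fun_prop), lintegral_lintegral_swap (by fun_prop)]
  rw [integral_integral_mul_integral_mul_eq hc hh hw (measurable_uncurry_integral_kernel hc)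
    (hbound.trans_lt hT)]
  refine integral_congr_ae ((ae_lt_top' (by fun_prop) hT.ne).mono fun y hy => ?_)
  dsimp only
  obtain hKg_fin | hgw : ∫⁻ y', g y' ∂K y < ∞ ∨ g y * ‖w y‖ₑ = 0 := by
    rcases ENNReal.mul_lt_top_iff.1 hy with ⟨hfin, -⟩ | h0 | h0
    exacts [.inl hfin, .inl (h0 ▸ ENNReal.zero_lt_top), .inr h0]
  · rw [integral_mul_integral_eq_integral_condMean hc hh hKg_fin]
    ring
  · have hφw : condMean μx c h y * w y = 0 := by
      rw [← enorm_eq_zero, ← nonpos_iff_eq_zero, ← hgw, enorm_mul]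
      gcongr
      exact enorm_condMean_le y
    rw [hφw, mul_zero, mul_right_comm, hφw, zero_mul]

end ConditionalMean

section JointDensity

variable {X Y : Type*} [MeasurableSpace X] [MeasurableSpace Y]

structure IsJointDensity (μx : Measure X) (μy : Measure Y) (f : X → Y → ℝ) (fX : X → ℝ)
    (fY : Y → ℝ) : Prop where
  measurable : Measurable (uncurry f)
  nonneg : ∀ x y, 0 ≤ f x y
  integrable : Integrable (uncurry f) (μx.prod μy)
  fX_eq : ∀ x, fX x = ∫ y, f x y ∂μy
  fY_eq : ∀ y, fY y = ∫ x, f x y ∂μx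
  fX_pos : ∀ x, 0 < fX x
  fY_pos : ∀ y, 0 < fY y

namespace IsJointDensity

variable {μx : Measure X} {μy : Measure Y} {f : X → Y → ℝ} {fX : X → ℝ} {fY : Y → ℝ}
  {h : X → ℝ}

theorem enorm_fX (hd : IsJointDensity μx μy f fX fY) (x : X) :
    ‖fX x‖ₑ = ∫⁻ y, ‖f x y‖ₑ ∂μy := by
  have hint : Integrable (f x) μy := .of_integral_ne_zero (hd.fX_eq x ▸ (hd.fX_pos x).ne')
  rw [← ofReal_integral_norm_eq_lintegral_enorm hint, Real.enorm_of_nonneg (hd.fX_pos x).le,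
    hd.fX_eq]
  simp_rw [Real.norm_of_nonneg (hd.nonneg x _)]

theorem lintegral_enorm_condDensity (hd : IsJointDensity μx μy f fX fY) (y : Y) :
    ∫⁻ x, ‖f x y / fY y‖ₑ ∂μx = 1 := by
  have hint : Integrable (f · y) μx := .of_integral_ne_zero (hd.fY_eq y ▸ (hd.fY_pos y).ne')
  rw [← ofReal_integral_norm_eq_lintegral_enorm (hint.div_const _)]
  simp_rw [Real.norm_of_nonneg (div_nonneg (hd.nonneg _ y) (hd.fY_pos y).le)]
  rw [integral_div, ← hd.fY_eq, div_self (hd.fY_pos y).ne', ENNReal.ofReal_one]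

theorem measurable_fX [SFinite μy] (hd : IsJointDensity μx μy f fX fY) : Measurable fX := by
  rw [funext hd.fX_eq]
  exact hd.measurable.stronglyMeasurable.integral_prod_right'.measurable

theorem integrable_fX [SFinite μy] (hd : IsJointDensity μx μy f fX fY) : Integrable fX μx := by
  rw [funext hd.fX_eq]
  exact hd.integrable.integral_prod_left

theorem measurable_fY [SFinite μx] (hd : IsJointDensity μx μy f fX fY) : Measurable fY := by
  rw [funext hd.fY_eq]
  exact hd.measurable.stronglyMeasurable.integral_prod_left'.measurable

theorem measurable_condDensity [SFinite μx] (hd : IsJointDensity μx μy f fX fY) :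
    Measurable (uncurry fun x y => f x y / fY y) := by
  have := hd.measurable
  have := hd.measurable_fY
  fun_prop

variable [SFinite μx] [SFinite μy]

theorem integrable_fY (hd : IsJointDensity μx μy f fX fY) : Integrable fY μy := by
  rw [funext hd.fY_eq]
  exact hd.integrable.integral_prod_right

theorem lintegral_lintegral_enorm_mul_condDensity (hd : IsJointDensity μx μy f fX fY)
    {u : X → ℝ} (hu : Measurable u) :
    ∫⁻ y, (∫⁻ x, ‖u x * (f x y / fY y)‖ₑ ∂μx) * ‖fY y‖ₑ ∂μy = ∫⁻ x, ‖u x * fX x‖ₑ ∂μx := by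
  have := hd.measurable
  have := hd.measurable_fY
  calc _ = ∫⁻ y, ∫⁻ x, ‖u x‖ₑ * ‖f x y‖ₑ ∂μx ∂μy := by
        refine lintegral_congr fun y => ?_
        rw [← lintegral_mul_const _ (by fun_prop)]
        refine lintegral_congr fun x => ?_
        rw [← enorm_mul, mul_assoc, div_mul_cancel₀ _ (hd.fY_pos y).ne', enorm_mul]
    _ = ∫⁻ x, ‖u x‖ₑ * ∫⁻ y, ‖f x y‖ₑ ∂μy ∂μx := by
        rw [lintegral_lintegral_swap (by fun_prop)]
        exact lintegral_congr fun x => lintegral_const_mul _ (by fun_prop)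
    _ = _ := lintegral_congr fun x => by rw [enorm_mul, hd.enorm_fX]

theorem lintegral_sq_lintegral_enorm_mul_condDensity_lt_top (hd : IsJointDensity μx μy f fX fY)
    (hh : Measurable h) (hh2 : Integrable (fun x => h x ^ 2 * fX x) μx) :
    ∫⁻ y, (∫⁻ x, ‖h x * (f x y / fY y)‖ₑ ∂μx) ^ 2 * ‖fY y‖ₑ ∂μy < ∞ :=
  calc _ ≤ ∫⁻ y, (∫⁻ x, ‖h x ^ 2 * (f x y / fY y)‖ₑ ∂μx) * ‖fY y‖ₑ ∂μy := by
        gcongr with y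
        exact sq_lintegral_enorm_mul_le (hd.measurable_condDensity.comp measurable_prodMk_right) hh
          (hd.lintegral_enorm_condDensity y)
    _ = ∫⁻ x, ‖h x ^ 2 * fX x‖ₑ ∂μx := hd.lintegral_lintegral_enorm_mul_condDensity (hh.pow_const 2)
    _ < ∞ := hasFiniteIntegral_iff_enorm.1 hh2.hasFiniteIntegral

theorem integral_condMean_condDensity_mul (hd : IsJointDensity μx μy f fX fY)
    (hh : Measurable h) (hh2 : Integrable (fun x => h x ^ 2 * fX x) μx) :
    ∫ y, condMean μx (fun x y => f x y / fY y) h y * fY y ∂μy = ∫ x, h x * fX x ∂μx := by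
  have hfin := integrable_mul_of_integrable_sq_mul hh hd.measurable_fX
    (fun x => (hd.fX_pos x).le) hd.integrable_fX hh2
  rw [integral_condMean_mul hd.measurable_condDensity hh hd.measurable_fY
    (by rw [hd.lintegral_lintegral_enorm_mul_condDensity hh]
        exact hasFiniteIntegral_iff_enorm.1 hfin.hasFiniteIntegral)]
  refine integral_congr_ae (.of_forall fun x => ?_)
  simp_rw [div_mul_cancel₀ _ (hd.fY_pos _).ne', ← hd.fX_eq]

theorem integral_integral_mul_mixKernel_eq (hd : IsJointDensity μx μy f fX fY)
    {K : Kernel Y Y} [IsMarkovKernel K]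
    (hK : ∀ A, MeasurableSet A → ∫ y, (K y A).toReal * fY y ∂μy = ∫ y in A, fY y ∂μy)
    (hh : Measurable h) (hh2 : Integrable (fun x => h x ^ 2 * fX x) μx) :
    ∫ x, ∫ x', h x * h x' * (∫ y, (∫ y', f x y' / fY y' ∂K y) * (f x' y / fX x') ∂μy) * fX x'
      ∂μx ∂μx
      = ∫ y, condMean μx (fun x y => f x y / fY y) h y *
          (∫ y', condMean μx (fun x y => f x y / fY y) h y' ∂K y) * fY y ∂μy := by
  rw [← integral_integral_mul_kernel_eq hd.measurable_condDensity hh hd.measurable_fY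
    (Kernel.comp_withDensity_eq_of_integral_eq hd.measurable_fY (fun y => (hd.fY_pos y).le)
      hd.integrable_fY hK)
    (hd.lintegral_sq_lintegral_enorm_mul_condDensity_lt_top hh hh2)]
  refine integral_congr_ae (.of_forall fun x => integral_congr_ae (.of_forall fun x' => ?_))
  dsimp only
  rw [mul_assoc, ← integral_mul_const]
  congr 2 with y
  field_simp [(hd.fX_pos x').ne', (hd.fY_pos y).ne']

end IsJointDensity

end JointDensity

theorem pR_covariance_ordering_general
    {X Y : Type*}
    [MeasurableSpace X]
    [MeasurableSpace Y]
    (μx : Measure X) (μy : Measure Y) [SigmaFinite μx] [SigmaFinite μy]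
    (f : X → Y → ℝ)
    (hf_meas : Measurable (Function.uncurry f))
    (hf_nonneg : ∀ x y, 0 ≤ f x y)
    (hf_prob : ∫ q, f q.1 q.2 ∂(μx.prod μy) = 1)
    (fX : X → ℝ) (hfX : ∀ x, fX x = ∫ y, f x y ∂μy)
    (fY : Y → ℝ) (hfY : ∀ y, fY y = ∫ x, f x y ∂μx)
    (hfX_pos : ∀ x, 0 < fX x) (hfY_pos : ∀ y, 0 < fY y)
    (fXY : X → Y → ℝ) (hfXY : ∀ x y, fXY x y = f x y / fY y)
    (fYX : Y → X → ℝ) (hfYX : ∀ y x, fYX y x = f x y / fX x)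
    (R S : Kernel Y Y) [IsMarkovKernel R] [IsMarkovKernel S]
    (hR_inv : ∀ A : Set Y, MeasurableSet A →
      ∫ y, ((R y) A).toReal * fY y ∂μy = ∫ y in A, fY y ∂μy)
    (hS_inv : ∀ A : Set Y, MeasurableSet A →
      ∫ y, ((S y) A).toReal * fY y ∂μy = ∫ y in A, fY y ∂μy)
    (hRS : ∀ φ : Y → ℝ, Measurable φ →
      Integrable (fun y => φ y ^ 2 * fY y) μy →
      (∫ y, φ y * fY y ∂μy) = 0 →
      ∫ y, φ y * (∫ y', φ y' ∂(R y)) * fY y ∂μy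
        ≤ ∫ y, φ y * (∫ y', φ y' ∂(S y)) * fY y ∂μy)
    (pR : X → X → ℝ)
    (hpR : ∀ x x', pR x x' = ∫ y, (∫ y', fXY x y' ∂(R y)) * fYX y x' ∂μy)
    (pS : X → X → ℝ)
    (hpS : ∀ x x', pS x x' = ∫ y, (∫ y', fXY x y' ∂(S y)) * fYX y x' ∂μy) :
    ∀ h : X → ℝ, Measurable h →
      Integrable (fun x => h x ^ 2 * fX x) μx →
      (∫ x, h x * fX x ∂μx) = 0 →
      ∫ x, (∫ x', h x * h x' * pR x x' * fX x' ∂μx) ∂μx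
        ≤ ∫ x, (∫ x', h x * h x' * pS x x' * fX x' ∂μx) ∂μx := by
  intro h hh hh2 hmean
  obtain rfl : fXY = fun x y => f x y / fY y := funext₂ hfXY
  obtain rfl : fYX = fun y x => f x y / fX x := funext₂ hfYX
  obtain rfl := funext₂ hpR
  obtain rfl := funext₂ hpS
  have hd : IsJointDensity μx μy f fX fY :=
    ⟨hf_meas, hf_nonneg, .of_integral_ne_zero (hf_prob ▸ one_ne_zero), hfX, hfY, hfX_pos, hfY_pos⟩
  have hc := hd.measurable_condDensity
  rw [hd.integral_integral_mul_mixKernel_eq hR_inv hh hh2,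
    hd.integral_integral_mul_mixKernel_eq hS_inv hh hh2]
  exact hRS _ (measurable_condMean hc hh)
    (integrable_condMean_sq_mul hc hh hd.measurable_fY
      (hd.lintegral_sq_lintegral_enorm_mul_condDensity_lt_top hh hh2))
    ((hd.integral_condMean_condDensity_mul hh hh2).trans hmean)

/-- Theorem 3 (covariance-ordering part): if `R ⪰₁ S` on `Y` (with respect to `f_Y`),
then `p_R ⪰₁ p_S` on `X` (with respect to `f_X`). -/
theorem pR_covariance_ordering
    {X Y : Type*}
    [MetricSpace X] [TopologicalSpace.SeparableSpace X] [LocallyCompactSpace X]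
    [MeasurableSpace X] [BorelSpace X]
    [MetricSpace Y] [TopologicalSpace.SeparableSpace Y] [LocallyCompactSpace Y]
    [MeasurableSpace Y] [BorelSpace Y]
    (μx : Measure X) (μy : Measure Y) [SigmaFinite μx] [SigmaFinite μy]
    (f : X → Y → ℝ)
    (hf_meas : Measurable (Function.uncurry f))
    (hf_nonneg : ∀ x y, 0 ≤ f x y)
    (hf_prob : ∫ q, f q.1 q.2 ∂(μx.prod μy) = 1)
    (fX : X → ℝ) (hfX : ∀ x, fX x = ∫ y, f x y ∂μy)
    (fY : Y → ℝ) (hfY : ∀ y, fY y = ∫ x, f x y ∂μx)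
    (hfX_pos : ∀ x, 0 < fX x) (hfY_pos : ∀ y, 0 < fY y)
    (fXY : X → Y → ℝ) (hfXY : ∀ x y, fXY x y = f x y / fY y)
    (fYX : Y → X → ℝ) (hfYX : ∀ y x, fYX y x = f x y / fX x)
    (R S : Kernel Y Y) [IsMarkovKernel R] [IsMarkovKernel S]
    (hR_inv : ∀ A : Set Y, MeasurableSet A →
      ∫ y, ((R y) A).toReal * fY y ∂μy = ∫ y in A, fY y ∂μy)
    (hS_inv : ∀ A : Set Y, MeasurableSet A →
      ∫ y, ((S y) A).toReal * fY y ∂μy = ∫ y in A, fY y ∂μy)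
    (hRS : ∀ φ : Y → ℝ, Measurable φ →
      Integrable (fun y => φ y ^ 2 * fY y) μy →
      (∫ y, φ y * fY y ∂μy) = 0 →
      ∫ y, φ y * (∫ y', φ y' ∂(R y)) * fY y ∂μy
        ≤ ∫ y, φ y * (∫ y', φ y' ∂(S y)) * fY y ∂μy)
    (pR : X → X → ℝ)
    (hpR : ∀ x x', pR x x' = ∫ y, (∫ y', fXY x y' ∂(R y)) * fYX y x' ∂μy)
    (pS : X → X → ℝ)
    (hpS : ∀ x x', pS x x' = ∫ y, (∫ y', fXY x y' ∂(S y)) * fYX y x' ∂μy) :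
    ∀ h : X → ℝ, Measurable h →
      Integrable (fun x => h x ^ 2 * fX x) μx →
      (∫ x, h x * fX x ∂μx) = 0 →
      ∫ x, (∫ x', h x * h x' * pR x x' * fX x' ∂μx) ∂μx
        ≤ ∫ x, (∫ x', h x * h x' * pS x x' * fX x' ∂μx) ∂μx :=
  pR_covariance_ordering_general μx μy f hf_meas hf_nonneg hf_prob fX hfX fY hfY hfX_pos hfY_pos fXY
    hfXY fYX hfYX R S hR_inv hS_inv hRS pR hpR pS hpS
end

section
/- (Proposition 1.) Suppose R^{1/2}(y,dy') is a Markov transition kernel on Y that is reversible with respect to f_Y (i.e. ∫_A R^{1/2}(y,B) f_Y(y) μ_y(dy) = ∫_B R^{1/2}(y,A) f_Y(y) μ_y(dy) for all measurable A, B) and that R(y,A) = ∫_Y R^{1/2}(w,A) R^{1/2}(y,dw) for all y and measurable A. Define f*(x,y) = f_Y(y) ∫_Y f_{X|Y}(x|y') R^{1/2}(y,dy'). Then: (i) ∫_Y f*(x,y) μ_y(dy) = f_X(x) for all x; (ii) ∫_X f*(x,y) μ_x(dx) = f_Y(y) for all y; and (iii) ∫_Y [f*(x,y)/f_Y(y)][f*(x',y)/f_X(x')]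 μ_y(dy) = p_R(x|x') for all x, x'. That is, p_R is a DA algorithm with respect to f*. -/
/-!
Put `ν = f_Y · μ_y`. Reversibility of `R^{1/2}` says that `ν ⊗ R^{1/2}` is invariant under
swapping the coordinates; hence `ν` is `R^{1/2}`-invariant and
`∫ u · R^{1/2} v dν = ∫ v · R^{1/2} u dν`. Since `f_Y(y) f_{X|Y}(x|y) = f(x,y)`, (i) is the
invariance of `ν` applied to `f_{X|Y}(x|·)`, (ii) is Tonelli together with `R^{1/2}(y,·)` being a
probability measure, and (iii) moves one factor `R^{1/2}` across by symmetry, so that the two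
half steps compose to `R`. The computations are done with lower Lebesgue integrals; the Bochner
integrals of the statement are recovered because invariance makes the kernel integrals finite
almost everywhere.
-/

open MeasureTheory ProbabilityTheory
open scoped ENNReal

theorem ENNReal.mul_mul_lt_top_of_mul_lt_top {a b c : ℝ≥0∞} (ha : a ≠ ∞)
    (hab : a * b < ∞) (hac : a * c < ∞) : a * (b * c) < ∞ := by
  rcases eq_or_ne a 0 with rfl | ha₀
  · simp
  · exact ENNReal.mul_lt_top ha.lt_top (ENNReal.mul_lt_top
      (ENNReal.lt_top_of_mul_ne_top_right hab.ne ha₀)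
      (ENNReal.lt_top_of_mul_ne_top_right hac.ne ha₀))

namespace ProbabilityTheory.Kernel

variable {α : Type*} [MeasurableSpace α] {κ : Kernel α α} {π : Measure α}

theorem IsReversible.map_swap_compProd [IsFiniteMeasure π] [IsFiniteKernel κ]
    (hκ : IsReversible κ π) : (π ⊗ₘ κ).map Prod.swap = π ⊗ₘ κ := by
  refine ext_of_generate_finite _ generateFrom_prod.symm isPiSystem_prod ?_ ?_
  · rintro _ ⟨A, hA, B, hB, rfl⟩
    rw [Measure.map_apply measurable_swap (.prod hA hB), Set.preimage_swap_prod,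
      Measure.compProd_apply_prod hB hA, Measure.compProd_apply_prod hA hB, hκ hB hA]
  · rw [Measure.map_apply measurable_swap .univ, Set.preimage_univ]

theorem IsReversible.lintegral_mul_lintegral_comm [IsFiniteMeasure π] [IsFiniteKernel κ]
    (hκ : IsReversible κ π) {f g : α → ℝ≥0∞} (hf : Measurable f) (hg : Measurable g) :
    ∫⁻ x, f x * ∫⁻ y, g y ∂κ x ∂π = ∫⁻ x, g x * ∫⁻ y, f y ∂κ x ∂π := by
  have hprod {u v : α → ℝ≥0∞} (hu : Measurable u) (hv : Measurable v) :
      ∫⁻ p, u p.1 * v p.2 ∂(π ⊗ₘ κ) = ∫⁻ x, u x * ∫⁻ y, v y ∂κ x ∂π := by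
    rw [Measure.lintegral_compProd (by fun_prop)]
    simp_rw [lintegral_const_mul _ hv]
  calc ∫⁻ x, f x * ∫⁻ y, g y ∂κ x ∂π
      = ∫⁻ p, f p.1 * g p.2 ∂(π ⊗ₘ κ).map Prod.swap := by
        rw [hκ.map_swap_compProd, hprod hf hg]
    _ = ∫⁻ p, g p.1 * f p.2 ∂(π ⊗ₘ κ) := by
        rw [MeasureTheory.lintegral_map (by fun_prop) measurable_swap]
        simp_rw [Prod.fst_swap, Prod.snd_swap, mul_comm]
    _ = ∫⁻ x, g x * ∫⁻ y, f y ∂κ x ∂π := hprod hg hf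

theorem Invariant.lintegral_lintegral (hκ : Invariant κ π) {f : α → ℝ≥0∞}
    (hf : Measurable f) :
    ∫⁻ x, ∫⁻ y, f y ∂κ x ∂π = ∫⁻ x, f x ∂π := by
  conv_rhs => rw [← hκ.def]
  rw [Measure.lintegral_bind κ.aemeasurable hf.aemeasurable]

theorem Invariant.lintegral_mul_lintegral {μ : Measure α} {ρ f : α → ℝ≥0∞}
    (hκ : Invariant κ (μ.withDensity ρ)) (hρ : Measurable ρ) (hf : Measurable f) :
    ∫⁻ x, ρ x * ∫⁻ y, f y ∂κ x ∂μ = ∫⁻ x, ρ x * f x ∂μ := by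
  have h := hκ.lintegral_lintegral hf
  rwa [lintegral_withDensity_eq_lintegral_mul _ hρ hf.lintegral_kernel,
    lintegral_withDensity_eq_lintegral_mul _ hρ hf] at h

theorem IsReversible.lintegral_mul_lintegral_mul_lintegral [IsFiniteKernel κ] {μ : Measure α}
    {ρ f g : α → ℝ≥0∞} [IsFiniteMeasure (μ.withDensity ρ)]
    (hκ : IsReversible κ (μ.withDensity ρ)) (hρ : Measurable ρ) (hf : Measurable f)
    (hg : Measurable g) :
    ∫⁻ x, ρ x * ((∫⁻ y, f y ∂κ x) * ∫⁻ y, g y ∂κ x) ∂μ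
      = ∫⁻ x, ρ x * (g x * ∫⁻ y, f y ∂(κ ∘ₖ κ) x) ∂μ := by
  have hdens {h : α → ℝ≥0∞} (hh : Measurable h) :
      ∫⁻ x, h x ∂μ.withDensity ρ = ∫⁻ x, ρ x * h x ∂μ :=
    lintegral_withDensity_eq_lintegral_mul _ hρ hh
  have h := hκ.lintegral_mul_lintegral_comm (hf.lintegral_kernel (κ := κ)) hg
  simp_rw [← lintegral_comp κ κ _ hf] at h
  rwa [hdens (by fun_prop), hdens (by fun_prop)] at h

theorem Invariant.ae_mul_lintegral_lt_top {μ : Measure α} {ρ f : α → ℝ≥0∞}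
    (hκ : Invariant κ (μ.withDensity ρ)) (hρ : Measurable ρ) (hf : Measurable f)
    (hρf : ∫⁻ x, ρ x * f x ∂μ ≠ ∞) :
    ∀ᵐ x ∂μ, ρ x * ∫⁻ y, f y ∂κ x < ∞ :=
  ae_lt_top' (by fun_prop) (hκ.lintegral_mul_lintegral hρ hf ▸ hρf)

theorem isReversible_withDensity_ofReal [IsFiniteKernel κ] {μ : Measure α} {ρ : α → ℝ}
    (hρ : Measurable ρ) (hρ0 : 0 ≤ ρ) (hρ_int : Integrable ρ μ)
    (h : ∀ A B, MeasurableSet A → MeasurableSet B →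
      ∫ x in A, (κ x B).toReal * ρ x ∂μ = ∫ x in B, (κ x A).toReal * ρ x ∂μ) :
    IsReversible κ (μ.withDensity fun x => ENNReal.ofReal (ρ x)) := by
  set ν := μ.withDensity fun x => ENNReal.ofReal (ρ x)
  have : IsFiniteMeasure ν := isFiniteMeasure_withDensity_ofReal hρ_int.hasFiniteIntegral
  have hflow {A B : Set α} (hA : MeasurableSet A) (hB : MeasurableSet B) :
      ∫ x in A, (κ x B).toReal * ρ x ∂μ = (∫⁻ x in A, κ x B ∂ν).toReal := by
    have h_toReal := integral_toReal (μ := μ.restrict A)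
      (hρ.ennreal_ofReal.mul (κ.measurable_coe hB)).aemeasurable
      (.of_forall fun x => ENNReal.mul_lt_top ENNReal.ofReal_lt_top (measure_lt_top (κ x) B))
    simp only [Pi.mul_apply, ENNReal.toReal_mul, ENNReal.toReal_ofReal (hρ0 _)] at h_toReal
    rw [setLIntegral_withDensity_eq_setLIntegral_mul _ hρ.ennreal_ofReal
      (κ.measurable_coe hB) hA]
    simp_rw [Pi.mul_apply, ← h_toReal, mul_comm]
  have hfin {A B : Set α} (hA : MeasurableSet A) (hB : MeasurableSet B) :
      ∫⁻ x in A, κ x B ∂ν ≠ ∞ := by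
    rw [← Measure.compProd_apply_prod hA hB]
    exact measure_ne_top _ _
  intro A B hA hB
  rw [← ENNReal.toReal_eq_toReal_iff' (hfin hA hB) (hfin hB hA), ← hflow hA hB, ← hflow hB hA]
  exact h A B hA hB

theorem Invariant.integral_mul_integral {μ : Measure α} {ρ φ : α → ℝ}
    (hκ : Invariant κ (μ.withDensity fun x => ENNReal.ofReal (ρ x)))
    (hρ : Measurable ρ) (hρ0 : 0 ≤ ρ) (hφ : Measurable φ) (hφ0 : 0 ≤ φ)
    (hρφ : Integrable (fun x => ρ x * φ x) μ) :
    ∫ x, ρ x * ∫ y, φ y ∂κ x ∂μ = ∫ x, ρ x * φ x ∂μ := by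
  have hfin : ∫⁻ x, ENNReal.ofReal (ρ x) * ENNReal.ofReal (φ x) ∂μ ≠ ∞ := by
    simp_rw [← ENNReal.ofReal_mul (hρ0 _)]
    exact hρφ.lintegral_lt_top.ne
  calc ∫ x, ρ x * ∫ y, φ y ∂κ x ∂μ
      = ∫ x, (ENNReal.ofReal (ρ x) * ∫⁻ y, ENNReal.ofReal (φ y) ∂κ x).toReal ∂μ := by
        simp_rw [integral_eq_lintegral_of_nonneg_ae (.of_forall hφ0) hφ.aestronglyMeasurable,
          ENNReal.toReal_mul, ENNReal.toReal_ofReal (hρ0 _)]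
    _ = (∫⁻ x, ENNReal.ofReal (ρ x) * ENNReal.ofReal (φ x) ∂μ).toReal := by
        rw [integral_toReal (by fun_prop) (hκ.ae_mul_lintegral_lt_top (by fun_prop)
          (by fun_prop) hfin), hκ.lintegral_mul_lintegral (by fun_prop) (by fun_prop)]
    _ = ∫ x, ρ x * φ x ∂μ := by
        rw [← integral_toReal (by fun_prop) (.of_forall fun _ => by finiteness)]
        simp_rw [ENNReal.toReal_mul, ENNReal.toReal_ofReal (hρ0 _),
          ENNReal.toReal_ofReal (hφ0 _)]

theorem IsReversible.integral_mul_integral_mul_integral [IsMarkovKernel κ] {μ : Measure α}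
    {ρ φ ψ : α → ℝ} (hκ : IsReversible κ (μ.withDensity fun x => ENNReal.ofReal (ρ x)))
    (hρ : Measurable ρ) (hρ0 : 0 ≤ ρ) (hρ_int : Integrable ρ μ)
    (hφ : Measurable φ) (hφ0 : 0 ≤ φ) (hψ : Measurable ψ) (hψ0 : 0 ≤ ψ)
    (hρφ : Integrable (fun x => ρ x * φ x) μ) (hρψ : Integrable (fun x => ρ x * ψ x) μ) :
    ∫ x, ρ x * ((∫ y, φ y ∂κ x) * ∫ y, ψ y ∂κ x) ∂μ
      = ∫ x, ρ x * (ψ x * ∫ y, φ y ∂(κ ∘ₖ κ) x) ∂μ := by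
  have : IsFiniteMeasure (μ.withDensity fun x => ENNReal.ofReal (ρ x)) :=
    isFiniteMeasure_withDensity_ofReal hρ_int.hasFiniteIntegral
  have hfin {χ : α → ℝ} (hχ : Integrable (fun x => ρ x * χ x) μ) :
      ∫⁻ x, ENNReal.ofReal (ρ x) * ENNReal.ofReal (χ x) ∂μ ≠ ∞ := by
    simp_rw [← ENNReal.ofReal_mul (hρ0 _)]
    exact hχ.lintegral_lt_top.ne
  have hinv := hκ.invariant
  have hφ_fin := hinv.ae_mul_lintegral_lt_top (by fun_prop) (by fun_prop) (hfin hρφ)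
  have hψ_fin := hinv.ae_mul_lintegral_lt_top (by fun_prop) (by fun_prop) (hfin hρψ)
  have hφ_fin₂ :=
    (hinv.comp hinv).ae_mul_lintegral_lt_top (by fun_prop) (by fun_prop) (hfin hρφ)
  simp_rw [integral_eq_lintegral_of_nonneg_ae (.of_forall hφ0) hφ.aestronglyMeasurable,
    integral_eq_lintegral_of_nonneg_ae (.of_forall hψ0) hψ.aestronglyMeasurable]
  have hlhs (x : α) : ρ x * ((∫⁻ y, ENNReal.ofReal (φ y) ∂κ x).toReal
      * (∫⁻ y, ENNReal.ofReal (ψ y) ∂κ x).toReal) = (ENNReal.ofReal (ρ x)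
      * ((∫⁻ y, ENNReal.ofReal (φ y) ∂κ x) * ∫⁻ y, ENNReal.ofReal (ψ y) ∂κ x)).toReal := by
    simp only [ENNReal.toReal_mul, ENNReal.toReal_ofReal (hρ0 x)]
  have hrhs (x : α) : ρ x * (ψ x * (∫⁻ y, ENNReal.ofReal (φ y) ∂(κ ∘ₖ κ) x).toReal)
      = (ENNReal.ofReal (ρ x) * (ENNReal.ofReal (ψ x)
        * ∫⁻ y, ENNReal.ofReal (φ y) ∂(κ ∘ₖ κ) x)).toReal := by
    simp only [ENNReal.toReal_mul, ENNReal.toReal_ofReal (hρ0 x),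
      ENNReal.toReal_ofReal (hψ0 x)]
  simp_rw [hlhs, hrhs]
  rw [integral_toReal (by fun_prop) (by filter_upwards [hφ_fin, hψ_fin] with x h₁ h₂ using
      ENNReal.mul_mul_lt_top_of_mul_lt_top ENNReal.ofReal_ne_top h₁ h₂),
    integral_toReal (by fun_prop) (by filter_upwards [hφ_fin₂] with x h using
      ENNReal.mul_mul_lt_top_of_mul_lt_top ENNReal.ofReal_ne_top (by finiteness) h),
    hκ.lintegral_mul_lintegral_mul_lintegral (by fun_prop) (by fun_prop) (by fun_prop)]

end ProbabilityTheory.Kernel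

theorem ProbabilityTheory.integral_integral_kernel_eq_one {α β γ : Type*}
    [MeasurableSpace α] [MeasurableSpace β] [MeasurableSpace γ] {μ : Measure β} [SFinite μ]
    (κ : Kernel α γ) [IsMarkovKernel κ] {g : β → γ → ℝ} (hg : Measurable (Function.uncurry g))
    (hg0 : 0 ≤ g)
    (h : ∀ z, ∫ b, g b z ∂μ = 1) (a : α) :
    ∫ b, ∫ z, g b z ∂κ a ∂μ = 1 := by
  have hlint (z : γ) : ∫⁻ b, ENNReal.ofReal (g b z) ∂μ = 1 := by
    rw [← ofReal_integral_eq_lintegral_ofReal (.of_integral_ne_zero (by simp [h]))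
      (.of_forall fun b => hg0 b z), h, ENNReal.ofReal_one]
  have htot : ∫⁻ b, ∫⁻ z, ENNReal.ofReal (g b z) ∂κ a ∂μ = 1 := by
    rw [lintegral_lintegral_swap (by fun_prop)]
    simp [hlint]
  calc ∫ b, ∫ z, g b z ∂κ a ∂μ
      = ∫ b, (∫⁻ z, ENNReal.ofReal (g b z) ∂κ a).toReal ∂μ := by
        simp_rw [integral_eq_lintegral_of_nonneg_ae (.of_forall (hg0 _))
          hg.of_uncurry_left.aestronglyMeasurable]
    _ = 1 := by
        rw [integral_toReal (by fun_prop) (ae_lt_top' (by fun_prop) (by simp [htot])), htot,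
          ENNReal.toReal_one]

theorem pR_is_da_algorithm_general
    {X Y : Type*}
    [MeasurableSpace X]
    [MeasurableSpace Y]
    (μx : Measure X) (μy : Measure Y) [SigmaFinite μx] [SigmaFinite μy]
    (f : X → Y → ℝ)
    (hf_meas : Measurable (Function.uncurry f))
    (hf_nonneg : ∀ x y, 0 ≤ f x y)
    (hf_prob : ∫ q, f q.1 q.2 ∂(μx.prod μy) = 1)
    (fX : X → ℝ) (hfX : ∀ x, fX x = ∫ y, f x y ∂μy)
    (fY : Y → ℝ) (hfY : ∀ y, fY y = ∫ x, f x y ∂μx)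
    (hfX_pos : ∀ x, 0 < fX x) (hfY_pos : ∀ y, 0 < fY y)
    (fXY : X → Y → ℝ) (hfXY : ∀ x y, fXY x y = f x y / fY y)
    (fYX : Y → X → ℝ) (hfYX : ∀ y x, fYX y x = f x y / fX x)
    (Rhalf : Kernel Y Y) [IsMarkovKernel Rhalf]
    (hRhalf_rev : ∀ A B : Set Y, MeasurableSet A → MeasurableSet B →
      ∫ y in A, ((Rhalf y) B).toReal * fY y ∂μy
        = ∫ y in B, ((Rhalf y) A).toReal * fY y ∂μy)
    (R : Kernel Y Y)
    (hR : ∀ (y : Y) (A : Set Y), MeasurableSet A →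
      (R y) A = ∫⁻ w, (Rhalf w) A ∂(Rhalf y))
    (pR : X → X → ℝ)
    (hpR : ∀ x x', pR x x' = ∫ y, (∫ y', fXY x y' ∂(R y)) * fYX y x' ∂μy)
    (fstar : X → Y → ℝ)
    (hfstar : ∀ x y, fstar x y = fY y * ∫ y', fXY x y' ∂(Rhalf y)) :
    (∀ x, ∫ y, fstar x y ∂μy = fX x) ∧
    (∀ y, ∫ x, fstar x y ∂μx = fY y) ∧
    (∀ x x', ∫ y, (fstar x y / fY y) * (fstar x' y / fX x') ∂μy = pR x x') := by
  have hfY_meas : Measurable fY :=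
    funext hfY ▸ hf_meas.stronglyMeasurable.integral_prod_left.measurable
  have hfY_int : Integrable fY μy :=
    funext hfY ▸ (integrable_of_integral_eq_one hf_prob).integral_prod_right
  have hfXY_meas : Measurable (Function.uncurry fXY) := by
    simp_rw [Function.uncurry_def, hfXY]
    exact hf_meas.div (hfY_meas.comp measurable_snd)
  have hfY_nonneg : 0 ≤ fY := fun y => (hfY_pos y).le
  have hfXY_nonneg : 0 ≤ fXY := fun x y => hfXY x y ▸ div_nonneg (hf_nonneg x y) (hfY_pos y).le
  have hfY_mul_fXY (x : X) : (fun y => fY y * fXY x y) = f x :=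
    funext fun y => by rw [hfXY, mul_div_cancel₀ _ (hfY_pos y).ne']
  have hf_int (x : X) : Integrable (fun y => fY y * fXY x y) μy :=
    hfY_mul_fXY x ▸ .of_integral_ne_zero (hfX x ▸ (hfX_pos x).ne')
  have hrev := Kernel.isReversible_withDensity_ofReal hfY_meas hfY_nonneg hfY_int hRhalf_rev
  have hR_eq : R = Rhalf ∘ₖ Rhalf := by
    ext y A hA
    rw [Kernel.comp_apply' _ _ _ hA, hR y A hA]
  refine ⟨fun x => ?_, fun y => ?_, fun x x' => ?_⟩
  · simp_rw [hfstar]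
    rw [hrev.invariant.integral_mul_integral hfY_meas hfY_nonneg
      hfXY_meas.of_uncurry_left (hfXY_nonneg x) (hf_int x), hfY_mul_fXY, hfX]
  · have hfXY_norm (y' : Y) : ∫ x, fXY x y' ∂μx = 1 := by
      simp_rw [hfXY, integral_div, ← hfY, div_self (hfY_pos y').ne']
    simp_rw [hfstar, integral_const_mul]
    rw [integral_integral_kernel_eq_one Rhalf hfXY_meas hfXY_nonneg hfXY_norm y, mul_one]
  · have hlhs (y : Y) : (fstar x y / fY y) * (fstar x' y / fX x')
        = fY y * ((∫ y', fXY x y' ∂(Rhalf y)) * ∫ y', fXY x' y' ∂(Rhalf y)) / fX x' := by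
      rw [hfstar, hfstar]
      field_simp [(hfY_pos y).ne']
    have hrhs (y : Y) : (∫ y', fXY x y' ∂(R y)) * fYX y x'
        = fY y * (fXY x' y * ∫ y', fXY x y' ∂((Rhalf ∘ₖ Rhalf) y)) / fX x' := by
      rw [hR_eq, hfYX, ← congrFun (hfY_mul_fXY x') y]
      ring
    rw [hpR]
    simp_rw [hlhs, hrhs, integral_div]
    rw [hrev.integral_mul_integral_mul_integral hfY_meas hfY_nonneg hfY_int
      hfXY_meas.of_uncurry_left (hfXY_nonneg x) hfXY_meas.of_uncurry_left (hfXY_nonneg x')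
      (hf_int x) (hf_int x')]

/-- Proposition 1: if `R = R^{1/2} ∘ R^{1/2}` with `R^{1/2}` reversible with respect to
`f_Y`, then `p_R` is a DA algorithm with respect to
`f*(x,y) = f_Y(y) ∫_Y f_{X|Y}(x|y') R^{1/2}(y,dy')`. -/
theorem pR_is_da_algorithm
    {X Y : Type*}
    [MetricSpace X] [TopologicalSpace.SeparableSpace X] [LocallyCompactSpace X]
    [MeasurableSpace X] [BorelSpace X]
    [MetricSpace Y] [TopologicalSpace.SeparableSpace Y] [LocallyCompactSpace Y]
    [MeasurableSpace Y] [BorelSpace Y]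
    (μx : Measure X) (μy : Measure Y) [SigmaFinite μx] [SigmaFinite μy]
    (f : X → Y → ℝ)
    (hf_meas : Measurable (Function.uncurry f))
    (hf_nonneg : ∀ x y, 0 ≤ f x y)
    (hf_prob : ∫ q, f q.1 q.2 ∂(μx.prod μy) = 1)
    (fX : X → ℝ) (hfX : ∀ x, fX x = ∫ y, f x y ∂μy)
    (fY : Y → ℝ) (hfY : ∀ y, fY y = ∫ x, f x y ∂μx)
    (hfX_pos : ∀ x, 0 < fX x) (hfY_pos : ∀ y, 0 < fY y)
    (fXY : X → Y → ℝ) (hfXY : ∀ x y, fXY x y = f x y / fY y)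
    (fYX : Y → X → ℝ) (hfYX : ∀ y x, fYX y x = f x y / fX x)
    (Rhalf : Kernel Y Y) [IsMarkovKernel Rhalf]
    (hRhalf_rev : ∀ A B : Set Y, MeasurableSet A → MeasurableSet B →
      ∫ y in A, ((Rhalf y) B).toReal * fY y ∂μy
        = ∫ y in B, ((Rhalf y) A).toReal * fY y ∂μy)
    (R : Kernel Y Y) [IsMarkovKernel R]
    (hR : ∀ (y : Y) (A : Set Y), MeasurableSet A →
      (R y) A = ∫⁻ w, (Rhalf w) A ∂(Rhalf y))
    (pR : X → X → ℝ)
    (hpR : ∀ x x', pR x x' = ∫ y, (∫ y', fXY x y' ∂(R y)) * fYX y x' ∂μy)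
    (fstar : X → Y → ℝ)
    (hfstar : ∀ x y, fstar x y = fY y * ∫ y', fXY x y' ∂(Rhalf y)) :
    (∀ x, ∫ y, fstar x y ∂μy = fX x) ∧
    (∀ y, ∫ x, fstar x y ∂μx = fY y) ∧
    (∀ x x', ∫ y, (fstar x y / fY y) * (fstar x' y / fX x') ∂μy = pR x x') :=
  pR_is_da_algorithm_general μx μy f hf_meas hf_nonneg hf_prob fX hfX fY hfY hfX_pos hfY_pos fXY
    hfXY fYX hfYX Rhalf hRhalf_rev R hR pR hpR fstar hfstar
end
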